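/- arXiv:1207.5201 — 5 statements merged into one kernel-verified Lean document; each statement's English description precedes it below -/
import Mathlib

section
/- Let n ≥ 1, α > 0, and let f : [0, α) → ℝ be a continuous function with f(t) ≠ 0 for all t ∈ [0, α). Suppose that for every Hermitian positive semidefinite matrix A ∈ M_n(ℂ) with all eigenvalues in [0, α) and every matrix C ∈ M_n(ℂ) with operator norm ‖C‖ ≤ 1, one has C* f(A) C ≤ f(C* A C). Then the function g(t) = t / f(t) is n-monotone on (0, α). -/
/-!
For `0 < A ≤ B`, the matrix `C = B^(-1/2) A^(1/2)` is a contraction with `C* B C = A`, so the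
transformer inequality at `B` reads `A^(1/2) w(B) A^(1/2) ≤ f(A)` with `w(t) = f(t) / t`;
conjugating by `A^(-1/2)` gives `w(B) ≤ w(A)`. Testing the hypothesis at `A = C = 0` gives
`f(0) ≥ 0`, hence `f > 0` on `[0, α)` by the intermediate value theorem. So `w(A)` and `w(B)`
are strictly positive, and operator antitonicity of inversion turns `w(B) ≤ w(A)` into
`g(A) ≤ g(B)`, since `g = 1 / w`.
-/

open Matrix
open scoped ComplexOrder Matrix.Norms.L2Operator

/-- A real function `h` is `n`-monotone on a set `I ⊆ ℝ` if for all Hermitian `n × n`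
complex matrices `A, B` with spectrum (i.e. all eigenvalues) in `I`, `A ≤ B` in the
Loewner order (i.e. `B − A` positive semidefinite) implies `h(A) ≤ h(B)`, where `h` is
applied via the continuous functional calculus `cfc`. -/
def NMonotoneOn (n : ℕ) (h : ℝ → ℝ) (I : Set ℝ) : Prop :=
  ∀ A B : Matrix (Fin n) (Fin n) ℂ, A.IsHermitian → B.IsHermitian →
    spectrum ℝ A ⊆ I → spectrum ℝ B ⊆ I →
    (B - A).PosSemidef → (cfc h B - cfc h A).PosSemidef

lemma IsPreconnected.pos_of_ne_zero {X : Type*} [TopologicalSpace X] {s : Set X} {f : X → ℝ}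
    (hs : IsPreconnected s) (hf : ContinuousOn f s) (hne : ∀ x ∈ s, f x ≠ 0) {a : X}
    (ha : a ∈ s) (hfa : 0 ≤ f a) {x : X} (hx : x ∈ s) : 0 < f x := by
  by_contra! hfx
  obtain ⟨y, hy, hfy⟩ := hs.intermediate_value hx ha hf ⟨hfx, hfa⟩
  exact hne y hy hfy

open CFC

section CStarAlgebra

variable {A : Type*} [CStarAlgebra A] [PartialOrder A] [StarOrderedRing A]

lemma CFC.conjugate_rpow_neg_one_half_cfc {b : A} (f : ℝ → ℝ)
    (hb : IsStrictlyPositive b) (hf : ContinuousOn f (spectrum ℝ b)) :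
    b ^ (-(1 / 2) : ℝ) * cfc f b * b ^ (-(1 / 2) : ℝ) = cfc (fun t => f t / t) b := by
  have hcont : ContinuousOn (fun t : ℝ => t ^ (-(1 / 2) : ℝ)) (spectrum ℝ b) :=
    ContinuousOn.rpow_const continuousOn_id fun t ht => Or.inl (hb.spectrum_pos ht).ne'
  rw [rpow_eq_cfc_real hb.nonneg, ← cfc_mul .., ← cfc_mul ..]
  refine cfc_congr fun t ht => ?_
  rw [mul_comm, ← mul_assoc, ← Real.rpow_add (hb.spectrum_pos ht)]
  norm_num [Real.rpow_neg_one, div_eq_mul_inv, mul_comm]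

lemma CFC.rpow_neg_one_half_mul_sqrt {a : A} (ha : IsStrictlyPositive a) :
    a ^ (-(1 / 2) : ℝ) * sqrt a = 1 := by
  rw [sqrt_eq_rpow, ← rpow_add ha.isUnit]
  norm_num [rpow_zero a ha.nonneg]

lemma CFC.sqrt_mul_rpow_neg_one_half {a : A} (ha : IsStrictlyPositive a) :
    sqrt a * a ^ (-(1 / 2) : ℝ) = 1 := by
  rw [sqrt_eq_rpow, ← rpow_add ha.isUnit]
  norm_num [rpow_zero a ha.nonneg]

lemma CFC.cfc_rpow_neg_one {a : A} {w : ℝ → ℝ} (hw : ∀ t ∈ spectrum ℝ a, 0 < w t)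
    (hwc : ContinuousOn w (spectrum ℝ a)) (ha : IsSelfAdjoint a) :
    cfc w a ^ (-1 : ℝ) = cfc (fun t => (w t)⁻¹) a := by
  rw [cfc_rpow hw hwc ha]
  exact cfc_congr fun t _ => Real.rpow_neg_one (w t)

lemma CFC.star_rpow_neg_one_half_mul_sqrt (a b : A) :
    star (b ^ (-(1 / 2) : ℝ) * sqrt a) = sqrt a * b ^ (-(1 / 2) : ℝ) := by
  rw [star_mul, (sqrt_nonneg a).isSelfAdjoint.star_eq, rpow_nonneg.isSelfAdjoint.star_eq]

lemma CFC.norm_rpow_neg_one_half_mul_sqrt_le_one {a b : A} (ha : 0 ≤ a)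
    (hb : IsStrictlyPositive b) (hab : a ≤ b) : ‖b ^ (-(1 / 2) : ℝ) * sqrt a‖ ≤ 1 := by
  rw [← norm_star, star_rpow_neg_one_half_mul_sqrt]
  exact (le_iff_norm_sqrt_mul_rpow a b).mp hab

lemma cfc_inv_le_cfc_inv {w : ℝ → ℝ} {a b : A} (ha : IsSelfAdjoint a)
    (hwa : ∀ t ∈ spectrum ℝ a, 0 < w t) (hwa_cont : ContinuousOn w (spectrum ℝ a))
    (hb : IsSelfAdjoint b) (hwb : ∀ t ∈ spectrum ℝ b, 0 < w t)
    (hwb_cont : ContinuousOn w (spectrum ℝ b)) (hab : cfc w a ≤ cfc w b) :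
    cfc (fun t => (w t)⁻¹) b ≤ cfc (fun t => (w t)⁻¹) a := by
  rw [← cfc_rpow_neg_one hwa hwa_cont ha, ← cfc_rpow_neg_one hwb hwb_cont hb]
  exact CStarAlgebra.rpow_neg_one_le_rpow_neg_one hab
    ((cfc_isStrictlyPositive_iff w a).mpr hwa)

theorem cfc_div_id_le_of_transformer {f : ℝ → ℝ} {a b : A} (ha : IsStrictlyPositive a)
    (hab : a ≤ b) (hfa : ContinuousOn f (spectrum ℝ a)) (hfb : ContinuousOn f (spectrum ℝ b))
    (htrans : ∀ c : A, ‖c‖ ≤ 1 → star c * cfc f b * c ≤ cfc f (star c * b * c)) :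
    cfc (fun t => f t / t) b ≤ cfc (fun t => f t / t) a := by
  have hb : IsStrictlyPositive b := ha.of_le hab
  set c := b ^ (-(1 / 2) : ℝ) * sqrt a
  have hc : star c * b * c = a := by
    rw [star_rpow_neg_one_half_mul_sqrt, show sqrt a * b ^ (-(1 / 2) : ℝ) * b * c =
      sqrt a * (b ^ (-(1 / 2) : ℝ) * b * b ^ (-(1 / 2) : ℝ)) * sqrt a by noncomm_ring,
      conjugate_rpow_neg_one_half b, mul_one, sqrt_mul_sqrt_self a ha.nonneg]
  have hconj : sqrt a * cfc (fun t => f t / t) b * sqrt a ≤ cfc f a := by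
    have h := htrans c (norm_rpow_neg_one_half_mul_sqrt_le_one ha.nonneg hb hab)
    rwa [hc, star_rpow_neg_one_half_mul_sqrt,
      show sqrt a * b ^ (-(1 / 2) : ℝ) * cfc f b * c =
        sqrt a * (b ^ (-(1 / 2) : ℝ) * cfc f b * b ^ (-(1 / 2) : ℝ)) * sqrt a by noncomm_ring,
      conjugate_rpow_neg_one_half_cfc f hb hfb] at h
  have h := (rpow_nonneg (a := a) (y := -(1 / 2))).isSelfAdjoint.conjugate_le_conjugate hconj
  rwa [show ∀ x : A, a ^ (-(1 / 2) : ℝ) * (sqrt a * x * sqrt a) * a ^ (-(1 / 2) : ℝ) =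
      (a ^ (-(1 / 2) : ℝ) * sqrt a) * x * (sqrt a * a ^ (-(1 / 2) : ℝ)) by intro; noncomm_ring,
    rpow_neg_one_half_mul_sqrt ha, sqrt_mul_rpow_neg_one_half ha, one_mul, mul_one,
    conjugate_rpow_neg_one_half_cfc f ha hfa] at h

theorem cfc_id_div_le_of_transformer {f : ℝ → ℝ} {a b : A} (ha : IsStrictlyPositive a)
    (hab : a ≤ b) (hfa : ∀ t ∈ spectrum ℝ a, 0 < f t) (hfb : ∀ t ∈ spectrum ℝ b, 0 < f t)
    (hfa_cont : ContinuousOn f (spectrum ℝ a)) (hfb_cont : ContinuousOn f (spectrum ℝ b))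
    (htrans : ∀ c : A, ‖c‖ ≤ 1 → star c * cfc f b * c ≤ cfc f (star c * b * c)) :
    cfc (fun t => t / f t) a ≤ cfc (fun t => t / f t) b := by
  have hb : IsStrictlyPositive b := ha.of_le hab
  have hpos : ∀ x : A, IsStrictlyPositive x → (∀ t ∈ spectrum ℝ x, 0 < f t) →
      ∀ t ∈ spectrum ℝ x, 0 < f t / t :=
    fun x hx hf t ht => div_pos (hf t ht) (hx.spectrum_pos ht)
  have hcont : ∀ x : A, IsStrictlyPositive x → ContinuousOn f (spectrum ℝ x) →
      ContinuousOn (fun t => f t / t) (spectrum ℝ x) :=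
    fun x hx hf => hf.div continuousOn_id fun t ht => (hx.spectrum_pos ht).ne'
  simpa only [inv_div] using cfc_inv_le_cfc_inv hb.isSelfAdjoint (hpos b hb hfb)
    (hcont b hb hfb_cont) ha.isSelfAdjoint (hpos a ha hfa) (hcont a ha hfa_cont)
    (cfc_div_id_le_of_transformer ha hab hfa_cont hfb_cont htrans)

end CStarAlgebra

open scoped MatrixOrder

/-- If `f : [0, α) → ℝ` is continuous and nonvanishing, and for every Hermitian positive
semidefinite `A ∈ Mₙ(ℂ)` with eigenvalues in `[0, α)` and every contraction `C`
(operator norm `‖C‖ ≤ 1`) one has `C* f(A) C ≤ f(C* A C)` in the Loewner order, then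
`g(t) = t / f(t)` is `n`-monotone on `(0, α)`. -/
theorem transformer_implies_quotient_monotone
    (n : ℕ) (hn : 1 ≤ n) (α : ℝ) (hα : 0 < α) (f : ℝ → ℝ)
    (hfc : ContinuousOn f (Set.Ico 0 α))
    (hfne : ∀ t ∈ Set.Ico (0 : ℝ) α, f t ≠ 0)
    (htrans : ∀ A : Matrix (Fin n) (Fin n) ℂ, A.PosSemidef → spectrum ℝ A ⊆ Set.Ico 0 α →
      ∀ C : Matrix (Fin n) (Fin n) ℂ, ‖C‖ ≤ 1 →
        (cfc f (Cᴴ * A * C) - Cᴴ * cfc f A * C).PosSemidef) :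
    NMonotoneOn n (fun t => t / f t) (Set.Ioo 0 α) := by
  have : Nonempty (Fin n) := Fin.pos_iff_nonempty.mp hn
  have hf0 : 0 ≤ f 0 := by
    simpa [algebraMap_eq_diagonal] using htrans 0 .zero (by simp [hα]) 0 (by simp)
  have hfpos : ∀ t ∈ Set.Ico 0 α, 0 < f t := fun t ht =>
    isPreconnected_Ico.pos_of_ne_zero hfc hfne ⟨le_rfl, hα⟩ hf0 ht
  intro A B hA hB hsA hsB hAB
  have hpos : ∀ X : Matrix (Fin n) (Fin n) ℂ, X.IsHermitian → spectrum ℝ X ⊆ Set.Ioo 0 α →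
      IsStrictlyPositive X := fun X hX hsX =>
    (StarOrderedRing.isStrictlyPositive_iff_spectrum_pos X hX).mpr fun t ht => (hsX ht).1
  have hsA' := hsA.trans Set.Ioo_subset_Ico_self
  have hsB' := hsB.trans Set.Ioo_subset_Ico_self
  exact cfc_id_div_le_of_transformer (hpos A hA hsA) hAB (fun t ht => hfpos t (hsA' ht))
    (fun t ht => hfpos t (hsB' ht)) (hfc.mono hsA') (hfc.mono hsB')
    (htrans B (hpos B hB hsB).nonneg.posSemidef hsB')
end

section
/- Let A = [[1,1],[1,1]] and B = [[2,1],[1,2]] regarded as 2×2 complex matrices. Then A is positive semidefinite, B is positive definite, A ≤ B in the Loewner order, A B⁻¹ A = (2/3) A, and consequently Tr(A B⁻¹ A) < Tr(A). In particular the function f(t) = t² (with g(t) = t/f(t) = 1/t, so that f(A)^{1/2} g(B) f(A)^{1/2} = A B⁻¹ A) does not satisfy the inequality Tr(A) ≤ Tr(f(A)^{1/2} g(B) f(A)^{1/2}) for all positive semidefinite A ≤ B in M₂(ℂ). -/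
/-!
`A = !![1, 1; 1, 1]` satisfies `A * A = 2 • A` and `B = 1 + A`. For any `A` with `A * A = c • A`
one has `(1 + A)⁻¹ = 1 - (1 + c)⁻¹ • A`, hence `A * (1 + A)⁻¹ * A = (c / (1 + c)) • A`; with
`c = 2` this is `(2 / 3) • A`, whose trace `4 / 3` is smaller than `Tr A = 2`.
-/

open Matrix
open scoped ComplexOrder

namespace Matrix

variable {n K : Type*} [Fintype n] [DecidableEq n] [Field K]

theorem inv_one_add_of_mul_self_eq_smul {A : Matrix n n K} {c : K}
    (hA : A * A = c • A) (hc : 1 + c ≠ 0) : (1 + A)⁻¹ = 1 - (1 + c)⁻¹ • A := by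
  refine inv_eq_right_inv ?_
  rw [mul_sub, mul_one, mul_smul_comm, add_mul, one_mul, hA,
    show A + c • A = (1 + c) • A by rw [add_smul, one_smul], smul_smul, inv_mul_cancel₀ hc,
    one_smul, add_sub_cancel_right]

theorem mul_inv_one_add_mul_of_mul_self_eq_smul {A : Matrix n n K} {c : K}
    (hA : A * A = c • A) (hc : 1 + c ≠ 0) : A * (1 + A)⁻¹ * A = (c / (1 + c)) • A := by
  rw [inv_one_add_of_mul_self_eq_smul hA hc, mul_sub, mul_one, mul_smul_comm, sub_mul,
    smul_mul_assoc, hA, smul_mul_assoc, hA, smul_smul, smul_smul, ← sub_smul]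
  congr 1
  field_simp
  ring

end Matrix

/-- For `A = [[1,1],[1,1]]` and `B = [[2,1],[1,2]]` in `M₂(ℂ)`: `A` is positive
semidefinite, `B` is positive definite, `A ≤ B` in the Loewner order,
`A B⁻¹ A = (2/3) A`, and `Tr(A B⁻¹ A) < Tr(A)`.  In particular for `f(t) = t²` and
`g(t) = t/f(t) = 1/t` (so `f(A)^{1/2} g(B) f(A)^{1/2} = A B⁻¹ A`), the inequality
`Tr(A) ≤ Tr(f(A)^{1/2} g(B) f(A)^{1/2})` fails for some positive semidefinite `A ≤ B`. -/
theorem square_function_counterexample :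
    (!![1, 1; 1, 1] : Matrix (Fin 2) (Fin 2) ℂ).PosSemidef ∧
    (!![2, 1; 1, 2] : Matrix (Fin 2) (Fin 2) ℂ).PosDef ∧
    ((!![2, 1; 1, 2] - !![1, 1; 1, 1] : Matrix (Fin 2) (Fin 2) ℂ)).PosSemidef ∧
    (!![1, 1; 1, 1] * (!![2, 1; 1, 2] : Matrix (Fin 2) (Fin 2) ℂ)⁻¹ * !![1, 1; 1, 1]
      = (2 / 3 : ℂ) • !![1, 1; 1, 1]) ∧
    (!![1, 1; 1, 1] * (!![2, 1; 1, 2] : Matrix (Fin 2) (Fin 2) ℂ)⁻¹ * !![1, 1; 1, 1]).trace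
      < (!![1, 1; 1, 1] : Matrix (Fin 2) (Fin 2) ℂ).trace := by
  have hA_eq : (!![1, 1; 1, 1] : Matrix (Fin 2) (Fin 2) ℂ) = vecMulVec ![1, 1] (star ![1, 1]) := by
    ext i j; fin_cases i <;> fin_cases j <;> simp [vecMulVec_apply]
  have hA : (!![1, 1; 1, 1] : Matrix (Fin 2) (Fin 2) ℂ).PosSemidef :=
    hA_eq ▸ posSemidef_vecMulVec_self_star _
  have hA_sq : (!![1, 1; 1, 1] * !![1, 1; 1, 1] : Matrix (Fin 2) (Fin 2) ℂ)
      = (2 : ℂ) • !![1, 1; 1, 1] := by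
    simp; norm_num
  have hB : (!![2, 1; 1, 2] : Matrix (Fin 2) (Fin 2) ℂ) = 1 + !![1, 1; 1, 1] := by
    rw [one_fin_two]; simp; norm_num
  have hprod : (!![1, 1; 1, 1] * (!![2, 1; 1, 2] : Matrix (Fin 2) (Fin 2) ℂ)⁻¹ * !![1, 1; 1, 1]
      = (2 / 3 : ℂ) • !![1, 1; 1, 1]) := by
    rw [hB, mul_inv_one_add_mul_of_mul_self_eq_smul hA_sq (by norm_num)]
    norm_num
  refine ⟨hA, hB ▸ PosDef.one.add_posSemidef hA, ?_, hprod, ?_⟩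
  · rw [hB, add_sub_cancel_right]
    exact PosSemidef.one
  · rw [hprod, trace_smul, trace_fin_two_of]
    norm_num [Complex.lt_def]
end

section
/- Let f be a strictly positive differentiable function on (0, ∞) and set g(t) = t / f(t). If there exists t₀ > 0 with f(t₀) < t₀ f'(t₀), then there exist positive definite Hermitian matrices A, B ∈ M₂(ℂ) with A ≤ B in the Loewner order such that Tr(A) > Tr(f(A)^{1/2} g(B) f(A)^{1/2}). -/
open Matrix
open scoped ComplexOrder Topology

/-!
The condition `f t₀ < t₀ f'(t₀)` says exactly that `g = t / f t` has negative derivative at `t₀`,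
so `g b < g t₀` for some `b > t₀`. Scalar matrices then suffice: take `A = t₀ • 1 ≤ B = b • 1`;
since `cfc h (r • 1) = h r • 1`, the matrix `f(A)^{1/2} g(B) f(A)^{1/2}` is the scalar
`f t₀ * g b < f t₀ * g t₀ = t₀`.
-/

lemma exists_gt_lt_of_hasDerivAt_neg {g : ℝ → ℝ} {c x : ℝ} (hg : HasDerivAt g c x)
    (hc : c < 0) : ∃ y, x < y ∧ g y < g x := by
  have hslope : ∀ᶠ y in 𝓝[>] x, slope g x y < 0 :=
    ((hasDerivAt_iff_tendsto_slope.mp hg).eventually (eventually_lt_nhds hc)).filter_mono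
      (nhdsWithin_mono _ fun y hy => ne_of_gt hy)
  obtain ⟨y, hy, hxy⟩ := (hslope.and self_mem_nhdsWithin).exists
  refine ⟨y, hxy, ?_⟩
  rw [slope_def_field, div_neg_iff] at hy
  rcases hy with ⟨-, hyx⟩ | ⟨hdiff, -⟩ <;> linarith

lemma exists_gt_div_lt_of_lt_mul_deriv {f : ℝ → ℝ} {x : ℝ} (hf : DifferentiableAt ℝ f x)
    (hfx : f x ≠ 0) (h : f x < x * deriv f x) : ∃ y, x < y ∧ y / f y < x / f x :=
  exists_gt_lt_of_hasDerivAt_neg ((hasDerivAt_id x).div hf.hasDerivAt hfx)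
    (div_neg_of_neg_of_pos (by simpa using h) (by positivity))

section ScalarMatrix

variable {n 𝕜 : Type*} [Fintype n] [DecidableEq n] [RCLike 𝕜]

lemma posDef_algebraMap {r : ℝ} (hr : 0 < r) : (algebraMap ℝ (Matrix n n 𝕜) r).PosDef := by
  rw [Algebra.algebraMap_eq_smul_one]
  exact PosDef.one.smul hr

lemma posSemidef_algebraMap {r : ℝ} (hr : 0 ≤ r) :
    (algebraMap ℝ (Matrix n n 𝕜) r).PosSemidef := by
  rw [Algebra.algebraMap_eq_smul_one]
  exact PosSemidef.one.smul hr

lemma trace_algebraMap_lt_trace_algebraMap [Nonempty n] {r s : ℝ} (h : r < s) :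
    (algebraMap ℝ (Matrix n n 𝕜) r).trace < (algebraMap ℝ (Matrix n n 𝕜) s).trace := by
  simp only [Algebra.algebraMap_eq_smul_one, trace_smul, trace_one]
  exact smul_lt_smul_of_pos_right h (by positivity)

end ScalarMatrix

/-- If `f` is a strictly positive differentiable function on `(0, ∞)`,
`g(t) = t / f(t)`, and `f(t₀) < t₀ f'(t₀)` for some `t₀ > 0`, then there exist positive
definite Hermitian `A ≤ B` in `M₂(ℂ)` with
`Tr(A) > Tr(f(A)^{1/2} g(B) f(A)^{1/2})`, where `f(A)^{1/2} = (√f)(A)` and `g(B)` are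
given by the continuous functional calculus `cfc`. -/
theorem counterexample_of_deriv_condition
    (f : ℝ → ℝ)
    (hfpos : ∀ t : ℝ, 0 < t → 0 < f t)
    (hfd : ∀ t : ℝ, 0 < t → DifferentiableAt ℝ f t)
    (g : ℝ → ℝ)
    (hg : ∀ t : ℝ, 0 < t → g t = t / f t)
    (t₀ : ℝ) (ht₀ : 0 < t₀) (hder : f t₀ < t₀ * deriv f t₀) :
    ∃ A B : Matrix (Fin 2) (Fin 2) ℂ, A.PosDef ∧ B.PosDef ∧ (B - A).PosSemidef ∧
      (cfc (fun t => Real.sqrt (f t)) A * cfc g B *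
        cfc (fun t => Real.sqrt (f t)) A).trace < A.trace := by
  have hf₀ := hfpos t₀ ht₀
  obtain ⟨b, htb, hdecr⟩ := exists_gt_div_lt_of_lt_mul_deriv (hfd t₀ ht₀) hf₀.ne' hder
  have hb : 0 < b := ht₀.trans htb
  have key : √(f t₀) * g b * √(f t₀) < t₀ := calc
    √(f t₀) * g b * √(f t₀) = f t₀ * (b / f b) := by
      rw [hg b hb, mul_right_comm, Real.mul_self_sqrt hf₀.le]
    _ < f t₀ * (t₀ / f t₀) := mul_lt_mul_of_pos_left hdecr hf₀
    _ = t₀ := mul_div_cancel₀ _ hf₀.ne'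
  refine ⟨algebraMap ℝ _ t₀, algebraMap ℝ _ b, posDef_algebraMap ht₀, posDef_algebraMap hb,
    ?_, ?_⟩
  · rw [← map_sub]
    exact posSemidef_algebraMap (sub_nonneg.mpr htb.le)
  · simpa only [cfc_algebraMap, ← map_mul] using trace_algebraMap_lt_trace_algebraMap key
end

section
/- For every real p > 1 there exist positive definite Hermitian matrices A, B ∈ M₂(ℂ) with A ≤ B in the Loewner order such that Tr(A) > Tr(A^{p/2} B^{1−p} A^{p/2}), where the matrix powers are defined via the continuous functional calculus. In other words, for f(t) = t^p with p > 1 and g(t) = t/f(t) = t^{1−p}, the inequality Tr(A) ≤ Tr(f(A)^{1/2} g(B) f(A)^{1/2}) fails for some 0 < A ≤ B. -/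
open Matrix
open scoped ComplexOrder

/-! Scalar matrices already violate the inequality: for `A = 1` and `B = 2` all functional calculi
reduce to real powers of scalars, and the trace inequality becomes `2 ^ (1 - p) < 1`, which holds
because `1 - p < 0`. -/

namespace Matrix

variable {n : Type*} [Fintype n] [DecidableEq n]

lemma trace_algebraMap_real (c : ℝ) :
    (algebraMap ℝ (Matrix n n ℂ) c).trace = Fintype.card n * c := by
  simp [Algebra.algebraMap_eq_smul_one, mul_comm]

lemma trace_algebraMap_real_lt [Nonempty n] {c d : ℝ} (hcd : c < d) :
    (algebraMap ℝ (Matrix n n ℂ) c).trace < (algebraMap ℝ (Matrix n n ℂ) d).trace := by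
  rw [trace_algebraMap_real, trace_algebraMap_real]
  exact mul_lt_mul_of_pos_left (by exact_mod_cast hcd) (by exact_mod_cast Fintype.card_pos)

lemma posDef_algebraMap_real {c : ℝ} (hc : 0 < c) : (algebraMap ℝ (Matrix n n ℂ) c).PosDef := by
  rw [algebraMap_eq_diagonal]
  exact PosDef.diagonal fun _ => by simpa using hc

lemma posSemidef_algebraMap_real_sub_one {c : ℝ} (hc : 1 ≤ c) :
    (algebraMap ℝ (Matrix n n ℂ) c - 1).PosSemidef := by
  rw [← map_one (algebraMap ℝ (Matrix n n ℂ)), ← map_sub, algebraMap_eq_diagonal]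
  exact PosSemidef.diagonal fun _ => by simpa using mod_cast hc

end Matrix

/-- For every real `p > 1` there exist positive definite Hermitian `A ≤ B` in `M₂(ℂ)`
with `Tr(A) > Tr(A^{p/2} B^{1−p} A^{p/2})`, the real matrix powers being given by the
continuous functional calculus `cfc` (i.e. `t ↦ t ^ r` with real exponent).  In other
words, for `f(t) = t^p` and `g(t) = t/f(t) = t^{1−p}`, the inequality
`Tr(A) ≤ Tr(f(A)^{1/2} g(B) f(A)^{1/2})` fails for some `0 < A ≤ B`. -/
theorem power_function_counterexample (p : ℝ) (hp : 1 < p) :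
    ∃ A B : Matrix (Fin 2) (Fin 2) ℂ, A.PosDef ∧ B.PosDef ∧ (B - A).PosSemidef ∧
      (cfc (fun t : ℝ => t ^ (p / 2)) A * cfc (fun t : ℝ => t ^ (1 - p)) B *
        cfc (fun t : ℝ => t ^ (p / 2)) A).trace < A.trace := by
  refine ⟨1, algebraMap ℝ _ 2, PosDef.one, posDef_algebraMap_real two_pos,
    posSemidef_algebraMap_real_sub_one one_le_two, ?_⟩
  rw [cfc_apply_one, cfc_algebraMap, Real.one_rpow, map_one, one_mul, mul_one,
    ← map_one (algebraMap ℝ (Matrix (Fin 2) (Fin 2) ℂ))]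
  exact trace_algebraMap_real_lt (Real.rpow_lt_one_of_one_lt_of_neg one_lt_two (by linarith))
end

section
/- For every n ≥ 1 and all positive definite Hermitian matrices A, B ∈ M_n(ℂ) with A ≤ B in the Loewner order: Tr(A) ≤ Tr((A · exp(−A))^{1/2} · exp(B) · (A · exp(−A))^{1/2}), where exp denotes the matrix exponential and A · exp(−A) is positive definite since A commutes with exp(−A); that is, Tr(A) ≤ Tr(f(A)^{1/2} g(B) f(A)^{1/2}) holds with g(t) = e^t and f(t) = t/g(t) = t e^{−t}. -/
open Matrix
open scoped ComplexOrder

/-- The positive semidefinite square root, as `Matrix.PosSemidef.sqrt` was defined in the older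
Mathlib (removed since). -/
noncomputable def Matrix.PosSemidef.sqrt {n 𝕜 : Type*} [Fintype n] [RCLike 𝕜] [DecidableEq n]
    {A : Matrix n n 𝕜} (hA : A.PosSemidef) : Matrix n n 𝕜 :=
  hA.1.eigenvectorUnitary.1 * diagonal ((↑) ∘ (√·) ∘ hA.1.eigenvalues) *
    (star hA.1.eigenvectorUnitary : Matrix n n 𝕜)

theorem Matrix.PosSemidef.sqrt_mul_self {n 𝕜 : Type*} [Fintype n] [RCLike 𝕜] [DecidableEq n]
    {A : Matrix n n 𝕜} (hA : A.PosSemidef) : hA.sqrt * hA.sqrt = A := by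
  have h : star (hA.1.eigenvectorUnitary : Matrix n n 𝕜) * hA.1.eigenvectorUnitary = 1 :=
    (Unitary.mem_iff.mp hA.1.eigenvectorUnitary.2).1
  unfold Matrix.PosSemidef.sqrt
  conv_rhs => rw [hA.1.spectral_theorem, Unitary.conjStarAlgAut_apply]
  simp only [Matrix.mul_assoc]
  rw [← Matrix.mul_assoc (star _) (hA.1.eigenvectorUnitary : Matrix n n 𝕜), h, Matrix.one_mul,
    ← Matrix.mul_assoc (diagonal _), diagonal_mul_diagonal]
  congr 3
  funext i
  simp only [Function.comp_apply]
  rw [← RCLike.ofReal_mul, Real.mul_self_sqrt (hA.eigenvalues_nonneg i)]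

section Aux

variable {n : ℕ}

private lemma exp_unitary_conj (U : Matrix.unitaryGroup (Fin n) ℂ)
    (M : Matrix (Fin n) (Fin n) ℂ) :
    NormedSpace.exp ((U : Matrix (Fin n) (Fin n) ℂ) * M * star (U : Matrix (Fin n) (Fin n) ℂ))
      = (U : Matrix (Fin n) (Fin n) ℂ) * NormedSpace.exp M
        * star (U : Matrix (Fin n) (Fin n) ℂ) := by
  have h1 : star (U : Matrix (Fin n) (Fin n) ℂ) * (U : Matrix (Fin n) (Fin n) ℂ) = 1 :=
    (Unitary.mem_iff.mp U.2).1
  have h2 : (U : Matrix (Fin n) (Fin n) ℂ) * star (U : Matrix (Fin n) (Fin n) ℂ) = 1 :=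
    (Unitary.mem_iff.mp U.2).2
  have hinv : (U : Matrix (Fin n) (Fin n) ℂ)⁻¹ = star (U : Matrix (Fin n) (Fin n) ℂ) :=
    Matrix.inv_eq_left_inv h1
  have hu : IsUnit (U : Matrix (Fin n) (Fin n) ℂ) :=
    ⟨⟨(U : Matrix (Fin n) (Fin n) ℂ), star (U : Matrix (Fin n) (Fin n) ℂ), h2, h1⟩, rfl⟩
  rw [← hinv]
  exact Matrix.exp_conj _ _ hu

private lemma diag_conj_diagonal (W : Matrix (Fin n) (Fin n) ℂ) (d : Fin n → ℂ) (i : Fin n) :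
    (Wᴴ * Matrix.diagonal d * W) i i = ∑ j, d j * (Complex.normSq (W j i) : ℂ) := by
  rw [Matrix.mul_apply]
  refine Finset.sum_congr rfl fun j _ => ?_
  rw [Matrix.mul_diagonal, Matrix.conjTranspose_apply]
  have h : star (W j i) * W j i = (Complex.normSq (W j i) : ℂ) := by
    rw [Complex.star_def, ← Complex.normSq_eq_conj_mul_self]
  calc star (W j i) * d j * W j i = d j * (star (W j i) * W j i) := by ring
    _ = d j * (Complex.normSq (W j i) : ℂ) := by rw [h]

private lemma exp_diagonal_ofReal (v : Fin n → ℝ) :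
    NormedSpace.exp (Matrix.diagonal (fun i => ((v i : ℝ) : ℂ)))
      = Matrix.diagonal (fun i => (Real.exp (v i) : ℂ)) := by
  have h : (NormedSpace.exp fun i => ((v i : ℝ) : ℂ)) = fun i => ((Real.exp (v i) : ℝ) : ℂ) := by
    funext j
    rw [Pi.coe_exp, ← Complex.exp_eq_exp_ℂ, Complex.ofReal_exp]
  rw [Matrix.exp_diagonal, h]

private lemma exp_hermitian {M : Matrix (Fin n) (Fin n) ℂ} (hM : M.IsHermitian) :
    NormedSpace.exp M
      = (hM.eigenvectorUnitary : Matrix (Fin n) (Fin n) ℂ)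
        * Matrix.diagonal (fun j => (Real.exp (hM.eigenvalues j) : ℂ))
        * star (hM.eigenvectorUnitary : Matrix (Fin n) (Fin n) ℂ) := by
  conv_lhs => rw [hM.spectral_theorem, Unitary.conjStarAlgAut_apply]
  rw [exp_unitary_conj]
  have hc : (RCLike.ofReal ∘ hM.eigenvalues : Fin n → ℂ)
      = fun i => ((hM.eigenvalues i : ℝ) : ℂ) := by
    funext i; rfl
  rw [hc, exp_diagonal_ofReal]

end Aux

/-- For every `n ≥ 1` and all positive definite Hermitian `A ≤ B` in `Mₙ(ℂ)`:
`A · exp(−A)` is positive semidefinite and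
`Tr(A) ≤ Tr((A exp(−A))^{1/2} exp(B) (A exp(−A))^{1/2})`, where `exp` is the matrix
exponential and `X^{1/2}` is the positive semidefinite square root.  This is the
inequality `Tr(A) ≤ Tr(f(A)^{1/2} g(B) f(A)^{1/2})` for `g(t) = eᵗ`, `f(t) = t e^{−t}`. -/
theorem exponential_function_inequality
    (n : ℕ) (hn : 1 ≤ n) (A B : Matrix (Fin n) (Fin n) ℂ)
    (hA : A.PosDef) (hB : B.PosDef) (hAB : (B - A).PosSemidef) :
    ∃ hX : (A * NormedSpace.exp (-A)).PosSemidef,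
      A.trace ≤ (hX.sqrt * NormedSpace.exp B * hX.sqrt).trace := by
  classical
  set U : Matrix (Fin n) (Fin n) ℂ := (hA.1.eigenvectorUnitary : Matrix (Fin n) (Fin n) ℂ)
    with hU
  set V : Matrix (Fin n) (Fin n) ℂ := (hB.1.eigenvectorUnitary : Matrix (Fin n) (Fin n) ℂ)
    with hV
  set a : Fin n → ℝ := hA.1.eigenvalues with ha
  set b : Fin n → ℝ := hB.1.eigenvalues with hb
  have hUstar : star U * U = 1 := (Unitary.mem_iff.mp hA.1.eigenvectorUnitary.2).1
  have hUstar' : U * star U = 1 := (Unitary.mem_iff.mp hA.1.eigenvectorUnitary.2).2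
  have hVstar : star V * V = 1 := (Unitary.mem_iff.mp hB.1.eigenvectorUnitary.2).1
  have hVstar' : V * star V = 1 := (Unitary.mem_iff.mp hB.1.eigenvectorUnitary.2).2
  have hApos : ∀ i, 0 < a i := fun i => hA.eigenvalues_pos i
  -- spectral decompositions
  have hAspec : A = U * Matrix.diagonal (fun i => (a i : ℂ)) * star U := by
    have := hA.1.spectral_theorem
    simpa [hU, ha, Function.comp_def] using this
  -- exp(-A)
  have hexpnegA : NormedSpace.exp (-A)
      = U * Matrix.diagonal (fun i => (Real.exp (-a i) : ℂ)) * star U := by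
    have hfun : Matrix.diagonal (fun i => ((-a i : ℝ) : ℂ))
        = -Matrix.diagonal (fun i => ((a i : ℝ) : ℂ)) := by
      rw [Matrix.diagonal_neg]
      congr 1
      funext i
      push_cast
      ring
    have h1 : -A = U * Matrix.diagonal (fun i => ((-a i : ℝ) : ℂ)) * star U := by
      rw [hAspec, hfun]
      simp only [Matrix.mul_neg, Matrix.neg_mul]
    rw [h1, exp_unitary_conj hA.1.eigenvectorUnitary, exp_diagonal_ofReal]
  -- X = A * exp(-A)
  set x : Fin n → ℝ := fun i => a i * Real.exp (-a i) with hx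
  have hXeq : A * NormedSpace.exp (-A)
      = U * Matrix.diagonal (fun i => (x i : ℂ)) * star U := by
    have hfun2 : (fun i => ((x i : ℝ) : ℂ))
        = fun i => ((a i : ℝ) : ℂ) * ((Real.exp (-a i) : ℝ) : ℂ) := by
      funext i
      simp only [hx]
      push_cast
      ring
    rw [hexpnegA]
    conv_lhs => rw [hAspec]
    rw [hfun2, ← Matrix.diagonal_mul_diagonal]
    simp only [Matrix.mul_assoc]
    rw [← Matrix.mul_assoc (star U) U, hUstar, Matrix.one_mul]
  have hXpsd : (A * NormedSpace.exp (-A)).PosSemidef := by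
    rw [hXeq]
    have hdiag : (Matrix.diagonal (fun i => (x i : ℂ))).PosSemidef := by
      refine Matrix.posSemidef_diagonal_iff.mpr fun i => ?_
      rw [Complex.zero_le_real]
      exact mul_nonneg (hApos i).le (Real.exp_pos _).le
    have := hdiag.mul_mul_conjTranspose_same U
    simpa [Matrix.star_eq_conjTranspose] using this
  refine ⟨hXpsd, ?_⟩
  set S := hXpsd.sqrt with hS
  set E := NormedSpace.exp B with hE
  have htr1 : (S * E * S).trace
      = (star U * E * U * Matrix.diagonal (fun i => (x i : ℂ))).trace := by
    rw [Matrix.trace_mul_cycle S E S, hXpsd.sqrt_mul_self, hXeq,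
      Matrix.trace_mul_cycle (U * Matrix.diagonal (fun i => (x i : ℂ))) (star U) E,
      Matrix.trace_mul_cycle E (U * Matrix.diagonal (fun i => (x i : ℂ))) (star U),
      ← Matrix.mul_assoc]
  -- trace A = sum of eigenvalues
  have htrA : A.trace = ∑ i, ((a i : ℝ) : ℂ) := by
    conv_lhs => rw [hAspec]
    rw [Matrix.trace_mul_cycle, hUstar, Matrix.one_mul, Matrix.trace_diagonal]
  -- W := star V * U, unitary
  set W : Matrix (Fin n) (Fin n) ℂ := star V * U with hW
  have hWunit : Wᴴ * W = 1 := by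
    rw [hW]
    simp only [Matrix.star_eq_conjTranspose, Matrix.conjTranspose_mul,
      Matrix.conjTranspose_conjTranspose, Matrix.mul_assoc]
    rw [← Matrix.mul_assoc V Vᴴ U, ← Matrix.star_eq_conjTranspose V, hVstar', Matrix.one_mul,
      ← Matrix.star_eq_conjTranspose U, hUstar]
  set p : Fin n → Fin n → ℝ := fun i j => Complex.normSq (W j i) with hp
  have hpnonneg : ∀ i j, 0 ≤ p i j := fun i j => Complex.normSq_nonneg _
  have hpsum : ∀ i, ∑ j, p i j = 1 := by
    intro i
    have h1 : (Wᴴ * Matrix.diagonal (fun _ : Fin n => (1 : ℂ)) * W) i i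
        = ∑ j, (1 : ℂ) * (Complex.normSq (W j i) : ℂ) := diag_conj_diagonal W _ i
    rw [Matrix.diagonal_one, Matrix.mul_one, hWunit] at h1
    simp only [Matrix.one_apply_eq, one_mul] at h1
    have h2 := congrArg Complex.re h1
    simp only [Complex.one_re] at h2
    rw [show ∑ j, ((Complex.normSq (W j i) : ℝ) : ℂ) = ((∑ j, Complex.normSq (W j i) : ℝ) : ℂ)
      by push_cast; rfl] at h2
    rw [Complex.ofReal_re] at h2
    exact h2.symm
  -- star U * E * U = Wᴴ * diagonal (exp b) * W
  have hEconj : star U * E * U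
      = Wᴴ * Matrix.diagonal (fun j => (Real.exp (b j) : ℂ)) * W := by
    rw [hE, exp_hermitian hB.1, ← hV, ← hb, hW]
    simp only [Matrix.star_eq_conjTranspose, Matrix.conjTranspose_mul,
      Matrix.conjTranspose_conjTranspose, Matrix.mul_assoc]
  -- star U * B * U = Wᴴ * diagonal b * W
  have hBconj : star U * B * U = Wᴴ * Matrix.diagonal (fun j => ((b j : ℝ) : ℂ)) * W := by
    conv_lhs => rw [hB.1.spectral_theorem, Unitary.conjStarAlgAut_apply]
    have hcb : (RCLike.ofReal ∘ hB.1.eigenvalues : Fin n → ℂ)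
        = fun j => ((b j : ℝ) : ℂ) := by
      funext j; rfl
    rw [← hV, hcb, hW]
    simp only [Matrix.star_eq_conjTranspose, Matrix.conjTranspose_mul,
      Matrix.conjTranspose_conjTranspose, Matrix.mul_assoc]
  -- star U * A * U = diagonal a
  have hAconj : star U * A * U = Matrix.diagonal (fun i => ((a i : ℝ) : ℂ)) := by
    conv_lhs => rw [hAspec]
    simp only [Matrix.mul_assoc]
    rw [← Matrix.mul_assoc (star U) U, hUstar, Matrix.one_mul, Matrix.mul_one]
  -- key per-index bound: a i ≤ ∑ j, b j * p i j
  have hdiagBA : ∀ i, a i ≤ ∑ j, b j * p i j := by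
    intro i
    have hpsd : (star U * (B - A) * U).PosSemidef := by
      have := hAB.conjTranspose_mul_mul_same U
      simpa [Matrix.star_eq_conjTranspose] using this
    have hent : 0 ≤ (star U * (B - A) * U) i i := by
      have h3 := hpsd.dotProduct_mulVec_nonneg (Pi.single i 1)
      simpa [dotProduct, Matrix.mulVec, Pi.single_apply, Finset.mul_sum,
        mul_ite, ite_mul] using h3
    have hsplit : star U * (B - A) * U = star U * B * U - star U * A * U := by
      simp [Matrix.mul_sub, Matrix.sub_mul]
    rw [hsplit, hBconj, hAconj] at hent
    have hBii : (Wᴴ * Matrix.diagonal (fun j => ((b j : ℝ) : ℂ)) * W) i i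
        = ((∑ j, b j * p i j : ℝ) : ℂ) := by
      rw [diag_conj_diagonal]
      push_cast
      rfl
    simp only [Matrix.sub_apply, hBii, Matrix.diagonal_apply_eq] at hent
    rw [← Complex.ofReal_sub, Complex.zero_le_real, sub_nonneg] at hent
    exact hent
  -- Jensen: exp (a i) ≤ ∑ j, exp (b j) * p i j
  have hjensen : ∀ i, Real.exp (a i) ≤ ∑ j, Real.exp (b j) * p i j := by
    intro i
    have h1 : Real.exp (∑ j, p i j • b j) ≤ ∑ j, p i j • Real.exp (b j) :=
      convexOn_exp.map_sum_le (fun j _ => hpnonneg i j) (hpsum i)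
        (fun j _ => Set.mem_univ _)
    simp only [smul_eq_mul] at h1
    calc Real.exp (a i) ≤ Real.exp (∑ j, b j * p i j) :=
          Real.exp_le_exp.mpr (hdiagBA i)
      _ = Real.exp (∑ j, p i j * b j) := by rw [Finset.sum_congr rfl fun j _ => mul_comm (b j) (p i j)]
      _ ≤ ∑ j, p i j * Real.exp (b j) := h1
      _ = ∑ j, Real.exp (b j) * p i j := Finset.sum_congr rfl fun j _ => mul_comm _ _
  -- assemble
  rw [htr1, htrA]
  have htrace_diag : (star U * E * U * Matrix.diagonal (fun i => (x i : ℂ))).trace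
      = ∑ i, (star U * E * U) i i * (x i : ℂ) := by
    simp [Matrix.trace, Matrix.diag, Matrix.mul_diagonal]
  rw [htrace_diag]
  refine Finset.sum_le_sum fun i _ => ?_
  have hEii : (star U * E * U) i i = ((∑ j, Real.exp (b j) * p i j : ℝ) : ℂ) := by
    rw [hEconj, diag_conj_diagonal]
    push_cast
    rfl
  rw [hEii, ← Complex.ofReal_mul, Complex.real_le_real]
  have hxnn : 0 ≤ x i := mul_nonneg (hApos i).le (Real.exp_pos _).le
  calc a i = Real.exp (a i) * x i := by
        rw [hx]
        simp only [Real.exp_neg]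
        field_simp
    _ ≤ (∑ j, Real.exp (b j) * p i j) * x i :=
        mul_le_mul_of_nonneg_right (hjensen i) hxnn
end
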